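/- On the hyperboloid model of the hyperbolic plane, the point c minimizing the function F(x) = ∑_{k=1}^n (cosh d_H(x,p_k) - 1) over x ∈ H, for given points p₁,...,pₙ ∈ H, exists, is unique, and equals the radial projection of the Euclidean average: c = π_H((p₁+⋯+pₙ)/n). -/

import Mathlib

/-!
On `Hyp` we have `cosh d(x,p) = -⟨x,p⟩`, so `F x = -⟨x,s⟩ - n` with `s = p₁ + ⋯ + pₙ`.
The vector `s` is future timelike and `s = √(-⟨s,s⟩) • π_H s`, hence
`F x + n = √(-⟨s,s⟩) · cosh d(x, π_H s)`, which is minimal exactly at `x = π_H s`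
by the reverse Cauchy–Schwarz inequality; rescaling by `1/n` does not move `π_H s`.
-/

open Finset

/-- The Minkowski bilinear form `⟨u,v⟩ = u₁v₁ + u₂v₂ - u₃v₃` on `ℝ³`. -/
def mink (u v : Fin 3 → ℝ) : ℝ := u 0 * v 0 + u 1 * v 1 - u 2 * v 2

/-- The hyperboloid model `H = {(x,y,z) : z² - x² - y² = 1, z > 0}`. -/
def Hyp : Set (Fin 3 → ℝ) := {p | mink p p = -1 ∧ 0 < p 2}

/-- The inverse hyperbolic cosine, `arcosh x = log (x + √(x²-1))` for `x ≥ 1`. -/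
noncomputable def arcosh (x : ℝ) : ℝ := Real.log (x + Real.sqrt (x ^ 2 - 1))

/-- Hyperbolic distance on the hyperboloid: `cosh d(p,q) = -⟨p,q⟩`. -/
noncomputable def dH (p q : Fin 3 → ℝ) : ℝ := arcosh (-(mink p q))

/-- The radial projection onto the hyperboloid, `π_H(v) = v/√(-⟨v,v⟩)`. -/
noncomputable def projH (v : Fin 3 → ℝ) : Fin 3 → ℝ :=
  (Real.sqrt (-(mink v v)))⁻¹ • v

/-- A vector in the open future light cone, i.e. a positive multiple of a point of `Hyp`. -/
def FutureTimelike (v : Fin 3 → ℝ) : Prop := mink v v < 0 ∧ 0 < v 2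

lemma mink_comm (u v : Fin 3 → ℝ) : mink u v = mink v u := by
  unfold mink; ring

lemma mink_smul_left (r : ℝ) (u v : Fin 3 → ℝ) : mink (r • u) v = r * mink u v := by
  simp only [mink, Pi.smul_apply, smul_eq_mul]; ring

lemma mink_smul_right (r : ℝ) (u v : Fin 3 → ℝ) : mink u (r • v) = r * mink u v := by
  rw [mink_comm, mink_smul_left, mink_comm]

lemma mink_sum_right {ι : Type*} (s : Finset ι) (x : Fin 3 → ℝ) (f : ι → Fin 3 → ℝ) :
    mink x (∑ k ∈ s, f k) = ∑ k ∈ s, mink x (f k) := by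
  simp only [mink, Finset.sum_apply, Finset.mul_sum, ← Finset.sum_add_distrib,
    ← Finset.sum_sub_distrib]

lemma mink_sum_left {ι : Type*} (s : Finset ι) (f : ι → Fin 3 → ℝ) (x : Fin 3 → ℝ) :
    mink (∑ k ∈ s, f k) x = ∑ k ∈ s, mink (f k) x := by
  simp only [mink_comm _ x, mink_sum_right]

/-- Reverse Cauchy–Schwarz on the hyperboloid: `cosh d(p,q) ≥ 1`. -/
lemma mink_le_neg_one {p q : Fin 3 → ℝ} (hp : p ∈ Hyp) (hq : q ∈ Hyp) : mink p q ≤ -1 := by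
  obtain ⟨hp1, hp2⟩ := hp
  obtain ⟨hq1, hq2⟩ := hq
  unfold mink at *
  nlinarith [sq_nonneg (p 0 - q 0), sq_nonneg (p 1 - q 1),
    sq_nonneg (p 0 * q 1 - p 1 * q 0), mul_pos hp2 hq2,
    sq_nonneg (p 2 - q 2), sq_nonneg (p 2 * q 2 + p 0 * q 0 + p 1 * q 1 + 1)]

lemma eq_of_mink_eq_neg_one {p q : Fin 3 → ℝ} (hp : p ∈ Hyp) (hq : q ∈ Hyp)
    (h : mink p q = -1) : p = q := by
  obtain ⟨hp1, hp2⟩ := hp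
  obtain ⟨hq1, hq2⟩ := hq
  unfold mink at *
  -- Equality in reverse Cauchy–Schwarz forces these three squares to vanish.
  have hsq : (p 0 - q 0) ^ 2 + (p 1 - q 1) ^ 2 + (p 0 * q 1 - p 1 * q 0) ^ 2 = 0 := by
    nlinarith [mul_pos hp2 hq2, sq_nonneg (p 0 - q 0), sq_nonneg (p 1 - q 1),
      sq_nonneg (p 0 * q 1 - p 1 * q 0), sq_nonneg (p 2 - q 2)]
  have h0 : p 0 = q 0 := by
    nlinarith [sq_nonneg (p 1 - q 1), sq_nonneg (p 0 * q 1 - p 1 * q 0)]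
  have h1 : p 1 = q 1 := by
    nlinarith [sq_nonneg (p 0 - q 0), sq_nonneg (p 0 * q 1 - p 1 * q 0)]
  have h2 : p 2 = q 2 := by nlinarith [mul_pos hp2 hq2]
  funext i
  fin_cases i <;> assumption

lemma cosh_arcosh {x : ℝ} (hx : 1 ≤ x) : Real.cosh (arcosh x) = x := by
  have hx2 : (0 : ℝ) ≤ x ^ 2 - 1 := by nlinarith
  have hpos : 0 < x + Real.sqrt (x ^ 2 - 1) := by positivity
  have hinv : (x + Real.sqrt (x ^ 2 - 1))⁻¹ = x - Real.sqrt (x ^ 2 - 1) :=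
    inv_eq_of_mul_eq_one_right (by nlinarith [Real.sq_sqrt hx2])
  rw [arcosh, Real.cosh_log hpos, hinv]
  ring

lemma cosh_dH {p q : Fin 3 → ℝ} (hp : p ∈ Hyp) (hq : q ∈ Hyp) :
    Real.cosh (dH p q) = -mink p q := by
  rw [dH, cosh_arcosh (by linarith [mink_le_neg_one hp hq])]

lemma sum_cosh_dH_sub_one {ι : Type*} (s : Finset ι) {x : Fin 3 → ℝ} (hx : x ∈ Hyp)
    {p : ι → Fin 3 → ℝ} (hp : ∀ k ∈ s, p k ∈ Hyp) :
    ∑ k ∈ s, (Real.cosh (dH x (p k)) - 1) = -mink x (∑ k ∈ s, p k) - s.card := by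
  rw [Finset.sum_congr rfl fun k hk => by rw [cosh_dH hx (hp k hk)], mink_sum_right,
    Finset.sum_sub_distrib, Finset.sum_neg_distrib, Finset.sum_const, nsmul_one]

lemma futureTimelike_sum {ι : Type*} {s : Finset ι} (hs : s.Nonempty)
    {p : ι → Fin 3 → ℝ} (hp : ∀ k ∈ s, p k ∈ Hyp) : FutureTimelike (∑ k ∈ s, p k) := by
  refine ⟨?_, ?_⟩
  · calc mink (∑ k ∈ s, p k) (∑ k ∈ s, p k)
        = ∑ j ∈ s, ∑ k ∈ s, mink (p k) (p j) := by
          simp only [mink_sum_left, mink_sum_right]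
      _ ≤ ∑ j ∈ s, ∑ k ∈ s, (-1 : ℝ) :=
          Finset.sum_le_sum fun j hj => Finset.sum_le_sum fun k hk =>
            mink_le_neg_one (hp k hk) (hp j hj)
      _ < 0 := by simp [hs.card_pos]
  · rw [Finset.sum_apply]
    exact Finset.sum_pos (fun k hk => (hp k hk).2) hs

lemma projH_smul_of_pos {r : ℝ} (hr : 0 < r) (v : Fin 3 → ℝ) :
    projH (r • v) = projH v := by
  have hnorm : -mink (r • v) (r • v) = r ^ 2 * -mink v v := by
    rw [mink_smul_left, mink_smul_right]; ring
  rw [projH, projH, hnorm, Real.sqrt_mul (sq_nonneg r), Real.sqrt_sq hr.le, smul_smul]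
  congr 1
  field_simp

lemma sqrt_smul_projH {v : Fin 3 → ℝ} (hv : mink v v < 0) :
    Real.sqrt (-mink v v) • projH v = v := by
  rw [projH, smul_smul, mul_inv_cancel₀ (Real.sqrt_pos.mpr (neg_pos.mpr hv)).ne', one_smul]

lemma projH_mem_Hyp {v : Fin 3 → ℝ} (hv : FutureTimelike v) : projH v ∈ Hyp := by
  have hl : 0 < Real.sqrt (-mink v v) := Real.sqrt_pos.mpr (neg_pos.mpr hv.1)
  refine ⟨?_, ?_⟩
  · rw [projH, mink_smul_left, mink_smul_right, ← mul_assoc, ← mul_inv, ← sq,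
      Real.sq_sqrt (neg_pos.mpr hv.1).le]
    field_simp [hv.1.ne]
  · rw [projH, Pi.smul_apply, smul_eq_mul]
    exact mul_pos (inv_pos.mpr hl) hv.2

lemma mink_eq_sqrt_mul_mink_projH {v : Fin 3 → ℝ} (hv : mink v v < 0) (x : Fin 3 → ℝ) :
    mink x v = Real.sqrt (-mink v v) * mink x (projH v) := by
  conv_lhs => rw [← sqrt_smul_projH hv]
  rw [mink_smul_right]

lemma neg_mink_projH_le {v x : Fin 3 → ℝ} (hv : FutureTimelike v) (hx : x ∈ Hyp) :
    -mink (projH v) v ≤ -mink x v := by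
  have hl : 0 < Real.sqrt (-mink v v) := Real.sqrt_pos.mpr (neg_pos.mpr hv.1)
  rw [mink_eq_sqrt_mul_mink_projH hv.1 x, mink_eq_sqrt_mul_mink_projH hv.1 (projH v),
    (projH_mem_Hyp hv).1]
  nlinarith [mink_le_neg_one hx (projH_mem_Hyp hv)]

lemma eq_projH_of_mink_eq {v x : Fin 3 → ℝ} (hv : FutureTimelike v) (hx : x ∈ Hyp)
    (h : mink x v = mink (projH v) v) : x = projH v := by
  have hl : 0 < Real.sqrt (-mink v v) := Real.sqrt_pos.mpr (neg_pos.mpr hv.1)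
  rw [mink_eq_sqrt_mul_mink_projH hv.1 x, mink_eq_sqrt_mul_mink_projH hv.1 (projH v),
    (projH_mem_Hyp hv).1, mul_right_inj' hl.ne'] at h
  exact eq_of_mink_eq_neg_one hx (projH_mem_Hyp hv) h

/-- For points `p₁,…,pₙ` on the hyperboloid, the function
`F(x) = ∑ₖ (cosh d_H(x,pₖ) - 1)` on `H` attains its minimum at a unique point,
namely the radial projection of the Euclidean average `c = π_H((p₁+⋯+pₙ)/n)`. -/
theorem cosh_center_of_mass_minimizer
    (n : ℕ) (hn : 0 < n) (p : Fin n → (Fin 3 → ℝ)) (hp : ∀ k, p k ∈ Hyp)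
    (F : (Fin 3 → ℝ) → ℝ)
    (hF : F = fun x => ∑ k, (Real.cosh (dH x (p k)) - 1))
    (c : Fin 3 → ℝ) (hc : c = projH ((n : ℝ)⁻¹ • ∑ k, p k)) :
    c ∈ Hyp ∧ (∀ x ∈ Hyp, F c ≤ F x) ∧ (∀ x ∈ Hyp, F x = F c → x = c) := by
  have : Nonempty (Fin n) := Fin.pos_iff_nonempty.mp hn
  have hs : FutureTimelike (∑ k, p k) :=
    futureTimelike_sum Finset.univ_nonempty fun k _ => hp k
  rw [projH_smul_of_pos (inv_pos.mpr (Nat.cast_pos.mpr hn))] at hc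
  subst hc
  have hFx : ∀ x ∈ Hyp, F x = -mink x (∑ k, p k) - n := fun x hx => by
    simp only [hF]
    rw [sum_cosh_dH_sub_one _ hx fun k _ => hp k, Finset.card_univ, Fintype.card_fin]
  refine ⟨projH_mem_Hyp hs, fun x hx => ?_, fun x hx hxc => ?_⟩
  · rw [hFx x hx, hFx _ (projH_mem_Hyp hs)]
    linarith [neg_mink_projH_le hs hx]
  · rw [hFx x hx, hFx _ (projH_mem_Hyp hs)] at hxc
    exact eq_projH_of_mink_eq hs hx (by linarith)
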